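/- Let Z[Ω] be the free abelian group on the set Ω of all compositions, and define ∂_M : Z[Ω] → Z[Ω] on generators by ∂_M(ω) = −Σ_{k=1}^{s−1} (−1)^k M_k(ω), where s is the length of ω and M_k is the k-th merge. Then ∂_M is a differential: ∂_M ∘ ∂_M = 0. -/

import Mathlib

/-!
Writing `M_i` for the 0-indexed merge, the merges satisfy the relation
`M_i ∘ M_{j+1} = M_j ∘ M_i` for `i ≤ j`, just like the face maps of a simplicial set.
In `∂_M ∂_M ω = ∑_{i,j} (-1)^(i+j) M_j (M_i ω)` the term of `(i, j)` with `i ≤ j` therefore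
cancels against the term of `(j + 1, i)`, which carries the opposite sign.
-/

/-- The merge operation (0-indexed at `i`): replace the adjacent entries at
positions `i` and `i+1` by their sum. With 1-indexed notation, `M_k = mergeAt · (k-1)`. -/
def mergeAt (l : List ℕ) (i : ℕ) : List ℕ :=
  l.take i ++ [l.getD i 0 + l.getD (i + 1) 0] ++ l.drop (i + 2)

/-- `∂_M(ω) = −Σ_{k=1}^{s−1} (−1)^k M_k(ω)`, where `s` is the length of `ω`,
as an element of the free abelian group `ℤ[Ω]` on compositions. -/
noncomputable def dM (ω : List ℕ) : List ℕ →₀ ℤ :=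
  -∑ k ∈ Finset.Ico 1 ω.length, ((-1 : ℤ) ^ k) • Finsupp.single (mergeAt ω (k - 1)) (1 : ℤ)

/-- The merge differential `∂_M : ℤ[Ω] → ℤ[Ω]`, extended ℤ-linearly from generators. -/
noncomputable def boundaryM : (List ℕ →₀ ℤ) →ₗ[ℤ] (List ℕ →₀ ℤ) :=
  Finsupp.lsum ℤ fun ω => LinearMap.toSpanSingleton ℤ _ (dM ω)

open Finset

theorem sum_range_sum_range_neg_one_pow_smul_eq_zero {M : Type*} [AddCommGroup M] (m : ℕ)
    (f : ℕ → ℕ → M) (hf : ∀ i j, i ≤ j → j + 1 < m → f (j + 1) i = f i j) :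
    ∑ i ∈ range m, ∑ j ∈ range (m - 1), (-1 : ℤ) ^ (i + j) • f i j = 0 := by
  rw [← sum_product', ← sum_filter_add_sum_filter_not _ (fun p => p.1 ≤ p.2),
    add_eq_zero_iff_eq_neg, ← sum_neg_distrib]
  refine sum_nbij' (fun p => (p.2 + 1, p.1)) (fun p => (p.2, p.1 - 1)) ?_ ?_ ?_ ?_ ?_
  all_goals simp only [mem_filter, mem_product, mem_range, Prod.forall, Prod.mk.injEq,
    true_and, and_true]
  iterate 4 intro i j h; omega
  rintro i j ⟨⟨-, hj⟩, hij⟩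
  rw [hf i j hij (by omega), add_right_comm, add_comm j, pow_succ, mul_neg_one, neg_smul, neg_neg]

lemma mergeAt_cons (x : ℕ) (l : List ℕ) (i : ℕ) :
    mergeAt (x :: l) (i + 1) = x :: mergeAt l i := by
  simp [mergeAt]

lemma length_mergeAt {l : List ℕ} {i : ℕ} (h : i + 2 ≤ l.length) :
    (mergeAt l i).length = l.length - 1 := by
  simp only [mergeAt, List.length_append, List.length_take, List.length_singleton,
    List.length_drop]
  omega

lemma mergeAt_mergeAt_of_le {ω : List ℕ} {i j : ℕ} (hij : i ≤ j) (hj : j + 2 ≤ ω.length) :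
    mergeAt (mergeAt ω (j + 1)) i = mergeAt (mergeAt ω i) j := by
  induction i generalizing ω j with
  | zero =>
    match ω, j with
    | [x, y], 0 => simp [mergeAt]
    | x :: y :: z :: l, 0 => simp [mergeAt, Nat.add_assoc]
    | x :: y :: l, j + 1 => simp [mergeAt]
  | succ i ih =>
    match ω, j, hij with
    | x :: l, j + 1, hij =>
      rw [mergeAt_cons, mergeAt_cons, mergeAt_cons, mergeAt_cons,
        ih (by omega) (by simp at hj; omega)]

lemma dM_eq_sum_range (ω : List ℕ) :
    dM ω = ∑ i ∈ range (ω.length - 1), (-1 : ℤ) ^ i • Finsupp.single (mergeAt ω i) 1 := by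
  rw [dM, ← sum_neg_distrib, sum_Ico_eq_sum_range]
  refine sum_congr rfl fun i _ => ?_
  rw [add_comm, Nat.add_sub_cancel, pow_succ, mul_neg_one, neg_smul, neg_neg]

lemma boundaryM_single (ω : List ℕ) : boundaryM (Finsupp.single ω 1) = dM ω := by
  simp [boundaryM]

lemma boundaryM_dM (ω : List ℕ) : boundaryM (dM ω) = 0 := by
  rw [dM_eq_sum_range, map_sum]
  simp only [map_smul, boundaryM_single, dM_eq_sum_range, smul_sum, smul_smul, ← pow_add]
  rw [sum_congr rfl fun i hi => by rw [length_mergeAt (by simp at hi; omega)]]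
  exact sum_range_sum_range_neg_one_pow_smul_eq_zero _ _ fun i j hij hj => by
    rw [mergeAt_mergeAt_of_le hij (by omega)]

/-- `∂_M` is a differential: `∂_M ∘ ∂_M = 0`. -/
theorem boundaryM_comp_boundaryM : boundaryM.comp boundaryM = 0 :=
  Finsupp.lhom_ext' fun ω => LinearMap.ext_ring <| by
    simp [boundaryM_single, boundaryM_dM]
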